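/- Let S and Y be independent, S ∈ (0,1] a.s. with right endpoint of its distribution equal to 1, and Y in the Gumbel max-domain of attraction with auxiliary function a regularly varying with index -τ, τ ≥ -1. Then for every fixed z ≥ 0 and every w ∈ (0,1), P(SY > u + a(u)z) ∼ ∫_w^1 P(Y > (u + a(u)z)/s) dG(s) as u → ∞, where G is the distribution of S. -/

import Mathlib

/-!
Write `ψ x = P(Y > x)` and `Λ = -log ψ`. The Gumbel condition says `Λ (t + a t σ) - Λ t → σ`;
these increments are monotone in `σ`, so the convergence is uniform on compact sets (Pólya).
Reading off `Λ (t' + a t)` both from `t` and from `t' = t + a t σ` shows that `a` is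
self-neglecting, and along the walk `u (k + 1) = u k + a (u k)` the quantity
`(1 - η) a (u k) - η u k` cannot increase; hence `a v = o(v)` and `ψ` is rapidly varying:
`ψ (c t) / ψ t → 0` for `c > 1`.

By independence `P(SY > r) = ∫ P(Y > r / s) dG(s)`. The part of the integral over `s ≤ w` is at
most `ψ (r / w)`, the part over `(w, 1]` at least `P(S > w') ψ (r / w')` for `w < w' < 1`, and
`P(S > w') > 0` because `1` is the right endpoint of `G`; so rapid variation makes the first
part negligible.
-/

open MeasureTheory ProbabilityTheory Filter Topology Real

/-- `g` is regularly varying at infinity with index `ρ`. -/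
def RegularlyVarying (g : ℝ → ℝ) (ρ : ℝ) : Prop :=
  ∀ x : ℝ, 0 < x → Filter.Tendsto (fun u => g (u * x) / g u) Filter.atTop (nhds (x ^ ρ))


theorem tendstoUniformlyOn_id_of_monotone {ι : Type*} {l : Filter ι} {F : ι → ℝ → ℝ}
    (hF : ∀ᶠ i in l, Monotone (F i)) {S : ℝ}
    (hlim : ∀ x ∈ Set.Icc 0 S, Tendsto (fun i => F i x) l (𝓝 x)) :
    TendstoUniformlyOn F id l (Set.Icc 0 S) := by
  rw [Metric.tendstoUniformlyOn_iff]
  intro ε hε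
  rcases lt_or_ge S 0 with hS | hS
  · exact .of_forall fun i x hx => absurd (hx.1.trans hx.2) hS.not_ge
  set h := ε / 3 with h_def
  have hh : 0 < h := by positivity
  -- grid points `k * h`, capped at `S` so that they stay in the interval
  set grid : ℕ → ℝ := fun k => min (k * h) S
  have hgrid : ∀ᶠ i in l, ∀ k ∈ Finset.range (⌊S / h⌋₊ + 2),
      |F i (grid k) - grid k| < h := by
    refine (eventually_all_finset _).2 fun k _ => ?_
    have hk : grid k ∈ Set.Icc 0 S := ⟨le_min (by positivity) hS, min_le_right _ _⟩
    exact (hlim _ hk).eventually (eventually_abs_sub_lt _ hh)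
  filter_upwards [hF, hgrid] with i hmono hclose x ⟨hx0, hxS⟩
  set k := ⌊x / h⌋₊
  have hkx : k * h ≤ x := (le_div_iff₀ hh).1 (Nat.floor_le (div_nonneg hx0 hh.le))
  have hxk : x < (k + 1) * h := (div_lt_iff₀ hh).1 (Nat.lt_floor_add_one _)
  have hkS : k ≤ ⌊S / h⌋₊ := Nat.floor_le_floor (by gcongr)
  have hlow : grid k = k * h := min_eq_left (hkx.trans hxS)
  have hlow' : x - h < grid k := by rw [hlow]; linarith
  have hup : x ≤ grid (k + 1) := le_min (by push_cast; linarith) hxS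
  have hup' : grid (k + 1) ≤ x + h := (min_le_left _ _).trans (by push_cast; linarith)
  have h1 := abs_lt.1 (hclose k (Finset.mem_range.2 (by omega)))
  have h2 := abs_lt.1 (hclose (k + 1) (Finset.mem_range.2 (by omega)))
  have m1 := hmono (hlow ▸ hkx : grid k ≤ x)
  have m2 := hmono hup
  rw [Real.dist_eq, id, abs_lt]
  constructor <;> linarith

theorem exists_iterate_le_lt {α : Type*} [LinearOrder α] {f : α → α} {x v : α} (hxv : x ≤ v)
    (hesc : ∃ k, v < f^[k] x) : ∃ j, f^[j] x ≤ v ∧ v < f^[j + 1] x := by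
  classical
  obtain ⟨j, hj⟩ : ∃ j, Nat.find hesc = j + 1 :=
    Nat.exists_eq_add_one.2 (Nat.pos_of_ne_zero fun h => (Nat.find_spec hesc).not_ge (h ▸ hxv))
  exact ⟨j, not_lt.1 (Nat.find_min hesc (by omega)), hj ▸ Nat.find_spec hesc⟩

/-- `Λ = -log ψ` for a tail `ψ` in the Gumbel domain of attraction with auxiliary function `a`. -/
def HasGumbelIncrements (Λ a : ℝ → ℝ) : Prop :=
  ∀ σ, 0 ≤ σ → Tendsto (fun t => Λ (t + a t * σ) - Λ t) atTop (𝓝 σ)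

section GumbelDomain

variable {Λ a : ℝ → ℝ}

theorem exists_lt_iterate_of_le_increment (hΛ : Monotone Λ) {T c : ℝ} (hc : 0 < c)
    (ha : ∀ t ≥ T, 0 ≤ a t) (hstep : ∀ t ≥ T, Λ t + c ≤ Λ (t + a t)) (v : ℝ) :
    ∃ k, v < (fun x => x + a x)^[k] T := by
  set u : ℕ → ℝ := fun k => (fun x => x + a x)^[k] T
  have hu : ∀ k, T ≤ u k ∧ Λ T + k * c ≤ Λ (u k) := by
    intro k
    induction k with
    | zero => simp [u]
    | succ k ih =>
      simp only [u, Function.iterate_succ_apply'] at ih ⊢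
      refine ⟨ih.1.trans (le_add_of_nonneg_right (ha _ ih.1)), ?_⟩
      push_cast
      linarith [hstep _ ih.1]
  by_contra! hbound
  obtain ⟨k, hk⟩ := exists_nat_gt ((Λ v - Λ T) / c)
  have := (hu k).2.trans (hΛ (hbound k))
  rw [div_lt_iff₀ hc] at hk
  linarith

theorem one_sub_sq_mul_le_of_walk {T η : ℝ} (hη0 : 0 ≤ η) (hη : η ≤ 1) (ha : ∀ t ≥ T, 0 < a t)
    (hsn : ∀ t ≥ T, ∀ σ ∈ Set.Icc (0 : ℝ) 1, (1 - η) * a (t + a t * σ) ≤ a t)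
    (hesc : ∀ v, ∃ k, v < (fun x => x + a x)^[k] T) {v : ℝ} (hv : T ≤ v) :
    (1 - η) ^ 2 * a v ≤ η * v + ((1 - η) * a T - η * T) := by
  set u : ℕ → ℝ := fun k => (fun x => x + a x)^[k] T
  have hsucc : ∀ k, u (k + 1) = u k + a (u k) := fun k => Function.iterate_succ_apply' _ k T
  have hu : ∀ k, T ≤ u k ∧ (1 - η) * a (u k) - η * u k ≤ (1 - η) * a T - η * T := by
    intro k
    induction k with
    | zero => simp [u]
    | succ k ih =>
      have hstep := hsn _ ih.1 1 ⟨zero_le_one, le_rfl⟩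
      rw [mul_one] at hstep
      rw [hsucc]
      exact ⟨ih.1.trans (le_add_of_nonneg_right (ha _ ih.1).le), by linarith [ih.2]⟩
  obtain ⟨j, hjv, hvj⟩ : ∃ j, u j ≤ v ∧ v < u (j + 1) := exists_iterate_le_lt hv (hesc v)
  have haj := ha _ (hu j).1
  set σ := (v - u j) / a (u j)
  have hσ : σ ∈ Set.Icc (0 : ℝ) 1 := by
    refine ⟨div_nonneg (by linarith) haj.le, (div_le_one haj).2 ?_⟩
    linarith [hsucc j ▸ hvj]
  have hav := hsn _ (hu j).1 σ hσ
  rw [mul_div_cancel₀ _ haj.ne', add_sub_cancel] at hav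
  calc (1 - η) ^ 2 * a v = (1 - η) * ((1 - η) * a v) := by ring
    _ ≤ (1 - η) * a (u j) := mul_le_mul_of_nonneg_left hav (by linarith)
    _ ≤ η * u j + ((1 - η) * a T - η * T) := by linarith [(hu j).2]
    _ ≤ η * v + ((1 - η) * a T - η * T) := by gcongr

theorem HasGumbelIncrements.tendstoUniformlyOn (h : HasGumbelIncrements Λ a)
    (hΛ : Monotone Λ) (ha : ∀ u > 0, 0 < a u) (S : ℝ) :
    TendstoUniformlyOn (fun t σ => Λ (t + a t * σ) - Λ t) id atTop (Set.Icc 0 S) := by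
  refine tendstoUniformlyOn_id_of_monotone ?_ fun σ hσ => h σ hσ.1
  filter_upwards [eventually_gt_atTop 0] with t ht x y hxy
  have := (ha t ht).le
  exact sub_le_sub_right (hΛ (by gcongr)) _

theorem HasGumbelIncrements.eventually_one_sub_mul_le (h : HasGumbelIncrements Λ a)
    (hΛ : Monotone Λ) (ha : ∀ u > 0, 0 < a u) {η : ℝ} (hη : 0 < η) :
    ∀ᶠ t in atTop, ∀ σ ∈ Set.Icc (0 : ℝ) 1, (1 - η) * a (t + a t * σ) ≤ a t := by
  have hU := Metric.tendstoUniformlyOn_iff.1 (h.tendstoUniformlyOn hΛ ha 2) (η / 3)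
    (by positivity)
  obtain ⟨T, hT⟩ := eventually_atTop.1 (hU.and (eventually_gt_atTop 0))
  have close : ∀ x ≥ T, ∀ s ∈ Set.Icc (0 : ℝ) 2, |Λ (x + a x * s) - Λ x - s| < η / 3 :=
    fun x hx s hs => by
      have := (hT x hx).1 s hs
      rwa [Real.dist_eq, abs_sub_comm, id_eq] at this
  refine eventually_atTop.2 ⟨T, fun t ht σ hσ => ?_⟩
  set t' := t + a t * σ with ht'_def
  have hat := ha t (hT t ht).2
  have ht' : T ≤ t' := ht.trans (le_add_of_nonneg_right (mul_nonneg hat.le hσ.1))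
  have hat' := ha t' (hT t' ht').2
  rcases le_total (a t') (a t) with hle | hle
  · exact (mul_le_of_le_one_left hat'.le (by linarith)).trans hle
  -- `Λ (t' + a t)` is read off both from `t` and from `t'`
  have e1 := close t ht (σ + 1) ⟨by linarith [hσ.1], by linarith [hσ.2]⟩
  have e2 := close t' ht' (a t / a t') ⟨by positivity, by linarith [(div_le_one hat').2 hle]⟩
  have e3 := close t ht σ ⟨hσ.1, by linarith [hσ.2]⟩
  rw [show t + a t * (σ + 1) = t' + a t by ring] at e1
  rw [mul_div_cancel₀ _ hat'.ne'] at e2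
  rw [← ht'_def] at e3
  have key : 1 - η < a t / a t' := by
    rw [abs_lt] at e1 e2 e3; linarith
  exact ((lt_div_iff₀ hat').1 key).le

theorem HasGumbelIncrements.eventually_le_mul_self (h : HasGumbelIncrements Λ a)
    (hΛ : Monotone Λ) (ha : ∀ u > 0, 0 < a u) {ρ : ℝ} (hρ : 0 < ρ) :
    ∀ᶠ v in atTop, a v ≤ ρ * v := by
  set η := min (ρ / 8) (1 / 2)
  have hη0 : 0 < η := lt_min (by positivity) (by norm_num)
  have hηρ : η ≤ ρ / 8 := min_le_left _ _
  have hη2 : η ≤ 1 / 2 := min_le_right _ _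
  have hstep : ∀ᶠ t in atTop, Λ t + 1 / 2 ≤ Λ (t + a t) := by
    filter_upwards [(h 1 zero_le_one).eventually (eventually_ge_nhds one_half_lt_one)] with t ht
    rw [mul_one] at ht
    linarith
  obtain ⟨T, hT⟩ := eventually_atTop.1 ((h.eventually_one_sub_mul_le hΛ ha hη0).and
    (hstep.and (eventually_gt_atTop 0)))
  have haT : ∀ t ≥ T, 0 < a t := fun t ht => ha t (hT t ht).2.2
  have hesc := exists_lt_iterate_of_le_increment hΛ one_half_pos (fun t ht => (haT t ht).le)
    (fun t ht => (hT t ht).2.1)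
  set C := (1 - η) * a T - η * T
  filter_upwards [eventually_ge_atTop T, eventually_ge_atTop (8 * C / ρ)] with v hTv hCv
  have hbound := one_sub_sq_mul_le_of_walk hη0.le (by linarith) haT (fun t ht => (hT t ht).1)
    hesc hTv
  have hC : 8 * C ≤ ρ * v := by rw [div_le_iff₀ hρ] at hCv; linarith
  have hv0 : 0 < v := (hT T le_rfl).2.2.trans_le hTv
  have hsq : 1 / 4 ≤ (1 - η) ^ 2 := by nlinarith
  nlinarith [haT v hTv]

theorem HasGumbelIncrements.tendsto_sub_atTop (h : HasGumbelIncrements Λ a) (hΛ : Monotone Λ)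
    (ha : ∀ u > 0, 0 < a u) {c : ℝ} (hc : 1 < c) :
    Tendsto (fun t => Λ (c * t) - Λ t) atTop atTop := by
  refine tendsto_atTop.2 fun M => ?_
  set σ := max M 0 + 1
  have hσ : 0 < σ := by positivity
  have hMσ : M < σ := by linarith [le_max_left M 0]
  filter_upwards [(h σ hσ.le).eventually (eventually_ge_nhds hMσ),
    h.eventually_le_mul_self hΛ ha (div_pos (sub_pos.2 hc) hσ), eventually_gt_atTop 0]
    with t hM ha_le ht
  refine hM.trans (sub_le_sub_right (hΛ ?_) _)
  rw [div_mul_eq_mul_div, le_div_iff₀ hσ] at ha_le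
  linarith

end GumbelDomain

theorem tendsto_div_zero_of_gumbel {ψ a : ℝ → ℝ} (hψ : Antitone ψ) (hψpos : ∀ t, 0 < ψ t)
    (ha : ∀ u > 0, 0 < a u)
    (hGum : ∀ t : ℝ, 0 ≤ t → Tendsto (fun u => ψ (u + a u * t) / ψ u) atTop (𝓝 (exp (-t))))
    {c : ℝ} (hc : 1 < c) : Tendsto (fun t => ψ (c * t) / ψ t) atTop (𝓝 0) := by
  set Λ := fun x => -log (ψ x)
  have hdiv : ∀ x y, ψ y / ψ x = exp (-(Λ y - Λ x)) := fun x y => by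
    rw [neg_sub, sub_neg_eq_add, neg_add_eq_sub, exp_sub, exp_log (hψpos y), exp_log (hψpos x)]
  have hΛ : Monotone Λ := fun x y hxy => neg_le_neg (log_le_log (hψpos y) (hψ hxy))
  have hinc : HasGumbelIncrements Λ a := fun σ hσ => by
    simpa only [hdiv, log_exp, neg_neg] using ((hGum σ hσ).log (exp_pos _).ne').neg
  simp only [hdiv]
  exact tendsto_exp_neg_atTop_nhds_zero.comp (hinc.tendsto_sub_atTop hΛ ha hc)

section AntitoneTail

variable {F : ℝ → ENNReal} {G : Measure ℝ} {r : ℝ}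

theorem setLIntegral_Iic_le_mul (hF : Antitone F) (hG : ∀ᵐ s ∂G, 0 < s) (hr : 0 ≤ r) (w : ℝ) :
    ∫⁻ s in Set.Iic w, F (r / s) ∂G ≤ F (r / w) * G (Set.Iic w) := by
  rw [← setLIntegral_const]
  refine setLIntegral_mono_ae aemeasurable_const ?_
  filter_upwards [hG] with s hs hsw
  exact hF (div_le_div_of_nonneg_left hr hs hsw)

theorem mul_le_setLIntegral_Ioc (hF : Antitone F) (hr : 0 ≤ r) {w w' b : ℝ} (hw' : 0 < w')
    (hww' : w ≤ w') :
    F (r / w') * G (Set.Ioc w' b) ≤ ∫⁻ s in Set.Ioc w b, F (r / s) ∂G := by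
  rw [← setLIntegral_const]
  calc ∫⁻ _ in Set.Ioc w' b, F (r / w') ∂G ≤ ∫⁻ s in Set.Ioc w' b, F (r / s) ∂G :=
        setLIntegral_mono (hF.measurable.comp (measurable_const.div measurable_id))
          fun s hs => hF (div_le_div_of_nonneg_left hr hw' hs.1.le)
    _ ≤ ∫⁻ s in Set.Ioc w b, F (r / s) ∂G := lintegral_mono_set (Set.Ioc_subset_Ioc_left hww')

end AntitoneTail

section Truncation

variable {Ω : Type*} [MeasurableSpace Ω] {μ : Measure Ω}

theorem antitone_measure_gt (Y : Ω → ℝ) : Antitone fun x => μ {ω | Y ω > x} :=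
  fun _ _ hxy => measure_mono fun _ h => hxy.trans_lt h

theorem measure_mul_gt_eq_lintegral [IsFiniteMeasure μ] {S Y : Ω → ℝ} (hS : Measurable S)
    (hY : Measurable Y) (hindep : IndepFun S Y μ) (hSpos : ∀ᵐ ω ∂μ, 0 < S ω) (r : ℝ) :
    μ {ω | S ω * Y ω > r} = ∫⁻ s, μ {ω | Y ω > r / s} ∂(μ.map S) := by
  have hset : MeasurableSet {p : ℝ × ℝ | r < p.1 * p.2} :=
    measurableSet_lt measurable_const (measurable_fst.mul measurable_snd)
  have hprod := (indepFun_iff_map_prod_eq_prod_map_map hS.aemeasurable hY.aemeasurable).1 hindep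
  calc μ {ω | S ω * Y ω > r} = μ.map (fun ω => (S ω, Y ω)) {p | r < p.1 * p.2} :=
        (Measure.map_apply (hS.prodMk hY) hset).symm
    _ = ∫⁻ s, μ.map Y (Prod.mk s ⁻¹' {p | r < p.1 * p.2}) ∂(μ.map S) := by
        rw [hprod, Measure.prod_apply hset]
    _ = ∫⁻ s, μ {ω | Y ω > r / s} ∂(μ.map S) := by
        refine lintegral_congr_ae ?_
        filter_upwards [(ae_map_iff hS.aemeasurable measurableSet_Ioi).2 hSpos] with s hs
        rw [Measure.map_apply hY (measurableSet_preimage measurable_prodMk_left hset)]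
        congr 1
        ext ω
        simp only [Set.mem_preimage, Set.mem_ofPred_eq, gt_iff_lt, div_lt_iff₀' hs]

theorem tendsto_measure_mul_gt_div_integral [IsProbabilityMeasure μ] {S Y : Ω → ℝ}
    (hS : Measurable S) (hY : Measurable Y) (hindep : IndepFun S Y μ)
    (hSpos : ∀ᵐ ω ∂μ, 0 < S ω) (hSle : ∀ᵐ ω ∂μ, S ω ≤ 1)
    (hSend : ∀ w : ℝ, w < 1 → 0 < μ {ω | S ω > w}) (hYend : ∀ u : ℝ, 0 < μ {ω | Y ω > u})
    (hrapid : ∀ c > 1, Tendsto (fun t => (μ {ω | Y ω > c * t}).toReal /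
      (μ {ω | Y ω > t}).toReal) atTop (𝓝 0))
    {w : ℝ} (hw0 : 0 < w) (hw1 : w < 1) :
    Tendsto (fun r => (μ {ω | S ω * Y ω > r}).toReal /
      ∫ s in Set.Ioc w 1, (μ {ω | Y ω > r / s}).toReal ∂(μ.map S)) atTop (𝓝 1) := by
  set G := μ.map S
  have : IsProbabilityMeasure G := Measure.isProbabilityMeasure_map hS.aemeasurable
  set F : ℝ → ENNReal := fun x => μ {ω | Y ω > x}
  have hF : Antitone F := antitone_measure_gt Y
  have hFpos : ∀ x, 0 < (F x).toReal :=
    fun x => ENNReal.toReal_pos (hYend x).ne' (measure_ne_top _ _)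
  set R := fun r => ∫⁻ s in Set.Iic w, F (r / s) ∂G
  set D := fun r => ∫⁻ s in Set.Ioc w 1, F (r / s) ∂G
  have hGle : ∀ᵐ s ∂G, s ∈ Set.Iic 1 := (ae_map_iff hS.aemeasurable measurableSet_Iic).2 hSle
  have hsplit : ∀ r, μ {ω | S ω * Y ω > r} = R r + D r := fun r => by
    rw [measure_mul_gt_eq_lintegral hS hY hindep hSpos, ← lintegral_union measurableSet_Ioc
      (Set.Iic_disjoint_Ioc le_rfl), Set.Iic_union_Ioc_eq_Iic hw1.le,
      Measure.restrict_eq_self_of_ae_mem hGle]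
  have hD : ∀ r, ∫ s in Set.Ioc w 1, (F (r / s)).toReal ∂G = (D r).toReal := fun r =>
    integral_toReal (hF.measurable.comp (measurable_const.div measurable_id)).aemeasurable
      (.of_forall fun _ => measure_lt_top _ _)
  have hfin : ∀ r, R r ≠ ⊤ ∧ D r ≠ ⊤ := fun r =>
    ENNReal.add_ne_top.1 (hsplit r ▸ measure_ne_top μ {ω | S ω * Y ω > r})
  obtain ⟨w', hww', hw'1⟩ := exists_between hw1
  have hw' : 0 < w' := hw0.trans hww'
  have hp : 0 < (G (Set.Ioc w' 1)).toReal := by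
    have hGw' : G (Set.Ioc w' 1) = μ {ω | S ω > w'} := by
      rw [← Set.Ioi_inter_Iic, measure_inter_conull (ae_iff.1 hGle),
        Measure.map_apply hS measurableSet_Ioi]
      rfl
    rw [hGw']
    exact ENNReal.toReal_pos (hSend w' hw'1).ne' (measure_ne_top _ _)
  set p := (G (Set.Ioc w' 1)).toReal
  have hR : ∀ r, 0 ≤ r → (R r).toReal ≤ (F (r / w)).toReal := fun r hr =>
    ENNReal.toReal_mono (measure_ne_top _ _) <|
      (setLIntegral_Iic_le_mul hF ((ae_map_iff hS.aemeasurable measurableSet_Ioi).2 hSpos) hr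
        w).trans (mul_le_of_le_one_right' prob_le_one)
  have hDge : ∀ r, 0 ≤ r → (F (r / w')).toReal * p ≤ (D r).toReal := fun r hr => by
    rw [← ENNReal.toReal_mul]
    exact ENNReal.toReal_mono (hfin r).2 (mul_le_setLIntegral_Ioc hF hr hw' hww'.le)
  have hratio : Tendsto (fun r => (R r).toReal / (D r).toReal) atTop (𝓝 0) := by
    have hlim := ((hrapid (w' / w) ((one_lt_div hw0).2 hww')).comp
      (tendsto_id.atTop_div_const hw')).div_const p
    rw [zero_div] at hlim
    refine squeeze_zero' (.of_forall fun r => by positivity) ?_ hlim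
    filter_upwards [eventually_ge_atTop 0] with r hr
    have hscale : w' / w * (r / w') = r / w := by field_simp
    rw [Function.comp_apply, id, hscale, div_div]
    exact div_le_div₀ (hFpos _).le (hR r hr) (mul_pos (hFpos _) hp) (hDge r hr)
  have hone := hratio.const_add 1
  rw [add_zero] at hone
  refine hone.congr' ?_
  filter_upwards [eventually_ge_atTop 0] with r hr
  have hDpos : 0 < (D r).toReal := (mul_pos (hFpos _) hp).trans_le (hDge r hr)
  show _ = (μ {ω | S ω * Y ω > r}).toReal / ∫ s in Set.Ioc w 1, (F (r / s)).toReal ∂G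
  rw [hD, hsplit, ENNReal.toReal_add (hfin r).1 (hfin r).2, add_div, div_self hDpos.ne', add_comm]

end Truncation

theorem truncation_step_gumbel_contraction_general
    {Ω : Type*} [MeasureSpace Ω] [IsProbabilityMeasure (ℙ : Measure Ω)]
    (S Y : Ω → ℝ) (hS : Measurable S) (hY : Measurable Y)
    (hindep : IndepFun S Y)
    (hSpos : ∀ᵐ ω ∂ℙ, 0 < S ω) (hSle : ∀ᵐ ω ∂ℙ, S ω ≤ 1)
    (hSend : ∀ w : ℝ, w < 1 → 0 < ℙ {ω | S ω > w})
    (hYend : ∀ u : ℝ, 0 < ℙ {ω | Y ω > u})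
    (a : ℝ → ℝ) (hapos : ∀ u > 0, 0 < a u)
    (hGum : ∀ t : ℝ, 0 ≤ t →
      Tendsto (fun u => (ℙ {ω | Y ω > u + a u * t}).toReal / (ℙ {ω | Y ω > u}).toReal)
        atTop (𝓝 (Real.exp (-t)))) :
    ∀ z : ℝ, 0 ≤ z → ∀ w : ℝ, 0 < w → w < 1 →
      Tendsto (fun u => (ℙ {ω | S ω * Y ω > u + a u * z}).toReal /
          ∫ s in Set.Ioc w 1, (ℙ {ω | Y ω > (u + a u * z) / s}).toReal
            ∂(Measure.map S ℙ)) atTop (𝓝 1) := by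
  intro z hz w hw0 hw1
  have hrapid : ∀ c > 1, Tendsto (fun t => (ℙ {ω | Y ω > c * t}).toReal /
      (ℙ {ω | Y ω > t}).toReal) atTop (𝓝 0) := fun c hc =>
    tendsto_div_zero_of_gumbel
      (fun x y hxy => ENNReal.toReal_mono (measure_ne_top _ _) (antitone_measure_gt Y hxy))
      (fun x => ENNReal.toReal_pos (hYend x).ne' (measure_ne_top _ _)) hapos hGum hc
  have hv : Tendsto (fun u => u + a u * z) atTop atTop := by
    refine tendsto_atTop_mono' atTop ?_ tendsto_id
    filter_upwards [eventually_gt_atTop 0] with u hu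
    exact le_add_of_nonneg_right (mul_nonneg (hapos u hu).le hz)
  exact (tendsto_measure_mul_gt_div_integral hS hY hindep hSpos hSle hSend hYend hrapid hw0
    hw1).comp hv

theorem truncation_step_gumbel_contraction
    {Ω : Type*} [MeasureSpace Ω] [IsProbabilityMeasure (ℙ : Measure Ω)]
    (S Y : Ω → ℝ) (hS : Measurable S) (hY : Measurable Y)
    (hindep : IndepFun S Y)
    (hSpos : ∀ᵐ ω ∂ℙ, 0 < S ω) (hSle : ∀ᵐ ω ∂ℙ, S ω ≤ 1)
    (hSend : ∀ w : ℝ, w < 1 → 0 < ℙ {ω | S ω > w})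
    (hYpos : ∀ᵐ ω ∂ℙ, 0 < Y ω)
    (hYend : ∀ u : ℝ, 0 < ℙ {ω | Y ω > u})
    (a : ℝ → ℝ) (hapos : ∀ u > 0, 0 < a u)
    (τ : ℝ) (hτ : -1 ≤ τ) (haRV : RegularlyVarying a (-τ))
    (hGum : ∀ t : ℝ, 0 ≤ t →
      Tendsto (fun u => (ℙ {ω | Y ω > u + a u * t}).toReal / (ℙ {ω | Y ω > u}).toReal)
        atTop (𝓝 (Real.exp (-t)))) :
    ∀ z : ℝ, 0 ≤ z → ∀ w : ℝ, 0 < w → w < 1 →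
      Tendsto (fun u => (ℙ {ω | S ω * Y ω > u + a u * z}).toReal /
          ∫ s in Set.Ioc w 1, (ℙ {ω | Y ω > (u + a u * z) / s}).toReal
            ∂(Measure.map S ℙ)) atTop (𝓝 1) :=
  truncation_step_gumbel_contraction_general S Y hS hY hindep hSpos hSle hSend hYend a hapos hGum
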